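/- Let 𝒢 = (G_1, …, G_τ) be a graph history on a finite vertex set V with |V| = n, let Q ⊆ V be a nonempty set of query nodes with Q ≠ V, and let S_0 = V, S_1, …, S_{n−1} be a score_m peeling sequence with removed vertices v_1, …, v_{n−1}. Suppose some removed vertex lies in Q, and let j be the least index with v_j ∈ Q. Then max_{0 ≤ i ≤ j−1} f_mm(S_i, 𝒢) = max_{S : Q ⊆ S ⊆ V} f_mm(S, 𝒢); that is, the Qr-FindBFF_M algorithm, which runs the minimum-score peeling and stops when a query node would be removed, solves the Qr-BFF-mm problem optimally. -/

import Mathlib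

open scoped Classical
open Finset

/-- The degree of `u` in the subgraph of `G` induced by the vertex set `S`. -/
noncomputable def degIn {n : ℕ} (G : SimpleGraph (Fin n)) (S : Finset (Fin n)) (u : Fin n) : ℕ :=
  (S.filter fun v => G.Adj u v).card

/-- The number of edges of the subgraph of `G` induced by `S`. -/
noncomputable def edgesIn {n : ℕ} (G : SimpleGraph (Fin n)) (S : Finset (Fin n)) : ℕ :=
  ((S ×ˢ S).filter fun p => p.1 < p.2 ∧ G.Adj p.1 p.2).card

/-- Minimum density `d_m(S, G)`: the minimum degree in the induced subgraph `G[S]`. -/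
noncomputable def minDensity {n : ℕ} (G : SimpleGraph (Fin n)) (S : Finset (Fin n)) : ℕ :=
  sInf ((fun u => degIn G S u) '' (S : Set (Fin n)))

/-- Average density `d_a(S, G) = 2·|E(G[S])| / |S|`. -/
noncomputable def avgDensity {n : ℕ} (G : SimpleGraph (Fin n)) (S : Finset (Fin n)) : ℝ :=
  2 * (edgesIn G S : ℝ) / (S.card : ℝ)

/-- `f_mm(S, 𝒢) = min_t d_m(S, G_t)`. -/
noncomputable def fmm {n τ : ℕ} (G : Fin τ → SimpleGraph (Fin n)) (S : Finset (Fin n)) : ℕ :=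
  sInf (Set.range fun t => minDensity (G t) S)

/-- `f_am(S, 𝒢) = (1/τ) · Σ_t d_m(S, G_t)`. -/
noncomputable def fam {n τ : ℕ} (G : Fin τ → SimpleGraph (Fin n)) (S : Finset (Fin n)) : ℝ :=
  (1 / (τ : ℝ)) * ∑ t, (minDensity (G t) S : ℝ)

/-- `f_ma(S, 𝒢) = min_t d_a(S, G_t)`. -/
noncomputable def fma {n τ : ℕ} (G : Fin τ → SimpleGraph (Fin n)) (S : Finset (Fin n)) : ℝ :=
  sInf (Set.range fun t => avgDensity (G t) S)

/-- `f_aa(S, 𝒢) = (1/τ) · Σ_t d_a(S, G_t)`. -/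
noncomputable def faa {n τ : ℕ} (G : Fin τ → SimpleGraph (Fin n)) (S : Finset (Fin n)) : ℝ :=
  (1 / (τ : ℝ)) * ∑ t, avgDensity (G t) S

/-- `score_m(v, 𝒢[S]) = min_t degree(v, G_t[S])`. -/
noncomputable def scoreM {n τ : ℕ} (G : Fin τ → SimpleGraph (Fin n)) (S : Finset (Fin n))
    (v : Fin n) : ℕ :=
  sInf (Set.range fun t => degIn (G t) S v)

/-- `score_a(v, 𝒢[S]) = (1/τ) · Σ_t degree(v, G_t[S])`. -/
noncomputable def scoreA {n τ : ℕ} (G : Fin τ → SimpleGraph (Fin n)) (S : Finset (Fin n))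
    (v : Fin n) : ℝ :=
  (1 / (τ : ℝ)) * ∑ t, (degIn (G t) S v : ℝ)

/-- A `score_m` peeling sequence: `S 0 = V`, and at each step the removed vertex `v i`
minimizes `score_m` over the current set. -/
def IsScoreMPeeling {n τ : ℕ} (G : Fin τ → SimpleGraph (Fin n)) (S : ℕ → Finset (Fin n))
    (v : ℕ → Fin n) : Prop :=
  S 0 = Finset.univ ∧
    ∀ i < n - 1, v i ∈ S i ∧ S (i + 1) = S i \ {v i} ∧
      ∀ u ∈ S i, scoreM G (S i) (v i) ≤ scoreM G (S i) u

/-- A `score_a` peeling sequence: `S 0 = V`, and at each step the removed vertex `v i`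
minimizes `score_a` over the current set. -/
def IsScoreAPeeling {n τ : ℕ} (G : Fin τ → SimpleGraph (Fin n)) (S : ℕ → Finset (Fin n))
    (v : ℕ → Fin n) : Prop :=
  S 0 = Finset.univ ∧
    ∀ i < n - 1, v i ∈ S i ∧ S (i + 1) = S i \ {v i} ∧
      ∀ u ∈ S i, scoreA G (S i) (v i) ≤ scoreA G (S i) u

/-!
A set `S'` that contains a removed vertex is dominated by the peeling chain: let `k` be the
first index with `v k ∈ S'`. Then `S' ⊆ S k`, and since `f_mm` of a set is the minimum
`score_m` over its vertices, monotonicity of degrees gives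
`f_mm(S') ≤ score_m(v k, S') ≤ score_m(v k, S k) = f_mm(S k)`.
When `S'` contains `Q`, this `k` is at most the first index `j` at which a query vertex is
removed, so the best of `S 0, …, S j` is optimal.
-/

section Degrees

variable {n : ℕ} (G : SimpleGraph (Fin n))

lemma degIn_mono {S' S : Finset (Fin n)} (h : S' ⊆ S) (u : Fin n) :
    degIn G S' u ≤ degIn G S u :=
  card_le_card (filter_subset_filter _ h)

lemma minDensity_le_degIn {S : Finset (Fin n)} {u : Fin n} (hu : u ∈ S) :
    minDensity G S ≤ degIn G S u :=
  Nat.sInf_le (Set.mem_image_of_mem _ (mem_coe.mpr hu))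

lemma exists_degIn_eq_minDensity {S : Finset (Fin n)} (hS : S.Nonempty) :
    ∃ u ∈ S, degIn G S u = minDensity G S := by
  obtain ⟨u, hu, hmin⟩ := Nat.sInf_mem ((coe_nonempty.mpr hS).image fun u => degIn G S u)
  exact ⟨u, mem_coe.mp hu, hmin⟩

end Degrees

section Scores

variable {n τ : ℕ} (G : Fin τ → SimpleGraph (Fin n))

lemma scoreM_mono {S' S : Finset (Fin n)} (h : S' ⊆ S) (u : Fin n) :
    scoreM G S' u ≤ scoreM G S u :=
  ciInf_mono (OrderBot.bddBelow _) fun t => degIn_mono (G t) h u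

lemma fmm_le_scoreM {S : Finset (Fin n)} {u : Fin n} (hu : u ∈ S) :
    fmm G S ≤ scoreM G S u :=
  ciInf_mono (OrderBot.bddBelow _) fun t => minDensity_le_degIn (G t) hu

lemma scoreM_le_fmm {S : Finset (Fin n)} {w : Fin n} (hw : w ∈ S)
    (hmin : ∀ u ∈ S, scoreM G S w ≤ scoreM G S u) : scoreM G S w ≤ fmm G S := by
  rcases isEmpty_or_nonempty (Fin τ) with hτ | hτ
  · -- without snapshots `scoreM` is the junk value `sInf ∅ = 0`
    simp [scoreM, Set.range_eq_empty]
  obtain ⟨t, ht⟩ := Nat.sInf_mem (Set.range_nonempty fun t => minDensity (G t) S)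
  obtain ⟨u, hu, hdeg⟩ := exists_degIn_eq_minDensity (G t) ⟨w, hw⟩
  calc scoreM G S w ≤ scoreM G S u := hmin u hu
    _ ≤ degIn (G t) S u := ciInf_le' _ t
    _ = fmm G S := hdeg.trans ht

lemma fmm_eq_scoreM_of_forall_le {S : Finset (Fin n)} {w : Fin n} (hw : w ∈ S)
    (hmin : ∀ u ∈ S, scoreM G S w ≤ scoreM G S u) : fmm G S = scoreM G S w :=
  le_antisymm (fmm_le_scoreM G hw) (scoreM_le_fmm G hw hmin)

end Scores

namespace IsScoreMPeeling

variable {n τ : ℕ} {G : Fin τ → SimpleGraph (Fin n)} {S : ℕ → Finset (Fin n)} {v : ℕ → Fin n}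

lemma subset_of_forall_notMem (hpeel : IsScoreMPeeling G S v) {T : Finset (Fin n)} {i : ℕ}
    (hi : i ≤ n - 1) (hT : ∀ k < i, v k ∉ T) : T ⊆ S i := by
  induction i with
  | zero => exact hpeel.1 ▸ subset_univ T
  | succ m ih =>
    rw [(hpeel.2 m (by omega)).2.1]
    intro x hx
    refine mem_sdiff.mpr ⟨ih (by omega) (fun k hk => hT k (by omega)) hx, ?_⟩
    intro hxm
    exact hT m m.lt_succ_self (mem_singleton.mp hxm ▸ hx)

lemma fmm_le_of_subset (hpeel : IsScoreMPeeling G S v) {T : Finset (Fin n)} {k : ℕ}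
    (hk : k < n - 1) (hvk : v k ∈ T) (hT : T ⊆ S k) : fmm G T ≤ fmm G (S k) := by
  obtain ⟨hvkS, -, hmin⟩ := hpeel.2 k hk
  calc fmm G T ≤ scoreM G T (v k) := fmm_le_scoreM G hvk
    _ ≤ scoreM G (S k) (v k) := scoreM_mono G hT (v k)
    _ = fmm G (S k) := (fmm_eq_scoreM_of_forall_le G hvkS hmin).symm

lemma exists_le_fmm (hpeel : IsScoreMPeeling G S v) {T : Finset (Fin n)} {j : ℕ}
    (hj : j < n - 1) (hvj : v j ∈ T) : ∃ k ≤ j, fmm G T ≤ fmm G (S k) := by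
  have hex : ∃ k, v k ∈ T := ⟨j, hvj⟩
  have hkj : Nat.find hex ≤ j := Nat.find_min' hex hvj
  refine ⟨Nat.find hex, hkj, hpeel.fmm_le_of_subset (by omega) (Nat.find_spec hex) ?_⟩
  exact hpeel.subset_of_forall_notMem (by omega) fun k hk => Nat.find_min hex hk

end IsScoreMPeeling

theorem qrFindBffM_optimal_general {n τ : ℕ}
    (G : Fin τ → SimpleGraph (Fin n))
    (Q : Finset (Fin n))
    (S : ℕ → Finset (Fin n)) (v : ℕ → Fin n) (hpeel : IsScoreMPeeling G S v)
    (j : ℕ) (hj : j < n - 1) (hvjQ : v j ∈ Q) (hleast : ∀ i < j, v i ∉ Q) :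
    ∃ i ≤ j, Q ⊆ S i ∧
      ∀ S' : Finset (Fin n), Q ⊆ S' → fmm G S' ≤ fmm G (S i) := by
  obtain ⟨i, hi, hbest⟩ :=
    exists_max_image (range (j + 1)) (fun i => fmm G (S i)) ⟨0, mem_range.mpr j.succ_pos⟩
  have hij : i ≤ j := Nat.lt_succ_iff.mp (mem_range.mp hi)
  refine ⟨i, hij, hpeel.subset_of_forall_notMem (by omega) fun k hk => hleast k (by omega), ?_⟩
  intro S' hQS'
  obtain ⟨k, hkj, hk⟩ := hpeel.exists_le_fmm hj (hQS' hvjQ)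
  exact hk.trans (hbest k (mem_range.mpr (Nat.lt_succ_of_le hkj)))

/-- The `Qr-FindBFF_M` algorithm (minimum-`score_m` peeling stopped when a
query node would be removed) solves the Qr-BFF-mm problem optimally: if `j` is the least index
at which a query node is removed, then some set in the chain `S 0, …, S j` contains `Q` and
attains the maximum of `f_mm` over all sets containing `Q`. -/
theorem qrFindBffM_optimal {n τ : ℕ} (hτ : 0 < τ)
    (G : Fin τ → SimpleGraph (Fin n))
    (Q : Finset (Fin n)) (hQ : Q.Nonempty) (hQne : Q ≠ Finset.univ)
    (S : ℕ → Finset (Fin n)) (v : ℕ → Fin n) (hpeel : IsScoreMPeeling G S v)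
    (j : ℕ) (hj : j < n - 1) (hvjQ : v j ∈ Q) (hleast : ∀ i < j, v i ∉ Q) :
    ∃ i ≤ j, Q ⊆ S i ∧
      ∀ S' : Finset (Fin n), Q ⊆ S' → fmm G S' ≤ fmm G (S i) :=
  qrFindBffM_optimal_general G Q S v hpeel j hj hvjQ hleast
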